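/- Every Gauss code with at most two chords can be transformed into the empty code by a finite sequence of C1 and W moves. -/

import Mathlib

/-!
Gauss codes for welded knots.

A Gauss code is a cyclic word in which each chord label occurs exactly twice,
once as a tail (`isHead = false`) and once as a head (`isHead = true`), both
occurrences carrying the common sign of the chord.  We represent the cyclic
word by a linear list of entries, working up to rotation (`List.rotate`) and
injective relabelling of the chords.
-/

/-- An endpoint of a chord: `(chord label, isHead, sign)`, where `isHead = false`
means a tail (over-passing) endpoint and `isHead = true` a head (under-passing)
endpoint, and the sign `true`/`false` stands for `+1`/`-1`. -/
abbrev GEntry : Type := ℕ × Bool × Bool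

/-- A (linear representative of a cyclic) word of endpoints. -/
abbrev GWord : Type := List GEntry

/-- The set of chord labels occurring in a word. -/
def chordSet (w : GWord) : Set ℕ := {a | ∃ e ∈ w, e.1 = a}

/-- `w` is a Gauss code: every chord label that occurs in `w` occurs exactly
twice, once as a tail and once as a head, with a common sign. -/
def IsGaussCode (w : GWord) : Prop :=
  ∀ a ∈ chordSet w,
    w.countP (fun e => e.1 == a) = 2 ∧
    ∃ s : Bool, (a, false, s) ∈ w ∧ (a, true, s) ∈ w

/-- The crossing change at the set `S` of chords: at every chord of `S`, the
tail and head markings of its two occurrences are exchanged and its sign is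
reversed. -/
def crossingChange (S : Finset ℕ) (w : GWord) : GWord :=
  w.map fun e => if e.1 ∈ S then (e.1, !e.2.1, !e.2.2) else e

/-- Deletion of the chord `a` (both of its endpoints) from the word. -/
def deleteChord (a : ℕ) (w : GWord) : GWord :=
  w.filter fun e => e.1 != a

/-- Equality of words up to cyclic permutation. -/
def RotEq (w w' : GWord) : Prop := ∃ n : ℕ, w' = w.rotate n

/-- Renaming the chords of a word by `f`. -/
def relabelWord (f : ℕ → ℕ) (w : GWord) : GWord := w.map fun e => (f e.1, e.2)

/-- Equality of words up to cyclic permutation and (injective) renaming of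
the chords. -/
def CyclicRename (w w' : GWord) : Prop :=
  ∃ (n : ℕ) (f : ℕ → ℕ), Function.Injective f ∧ w' = relabelWord f (w.rotate n)

/-- Raw C1 move (deleting direction): deletion of a chord whose two endpoints
occupy adjacent positions; the inserting direction is the converse relation. -/
def C1delRaw (u v : GWord) : Prop :=
  ∃ (x y : GWord) (a : ℕ) (h s : Bool),
    (∀ e ∈ x ++ y, e.1 ≠ a) ∧
    u = x ++ (a, h, s) :: (a, !h, s) :: y ∧
    v = x ++ y

/-- Raw W move: interchange of two adjacent endpoints that are both tails
(of any two chords, regardless of signs). -/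
def WRaw (u v : GWord) : Prop :=
  ∃ (x y : GWord) (a b : ℕ) (s t : Bool),
    u = x ++ (a, false, s) :: (b, false, t) :: y ∧
    v = x ++ (b, false, t) :: (a, false, s) :: y

/-- Raw C2 move (deleting direction): deletion of a pair of chords of opposite
signs whose two tails occupy adjacent positions and whose two heads occupy
adjacent positions. -/
def C2delRaw (u v : GWord) : Prop :=
  ∃ (x y z : GWord) (a b : ℕ) (s : Bool),
    a ≠ b ∧
    (∀ e ∈ x ++ y ++ z, e.1 ≠ a ∧ e.1 ≠ b) ∧
    (u = x ++ (a, false, s) :: (b, false, !s) :: (y ++ (a, true, s) :: (b, true, !s) :: z) ∨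
     u = x ++ (a, false, s) :: (b, false, !s) :: (y ++ (b, true, !s) :: (a, true, s) :: z)) ∧
    v = x ++ y ++ z

/-- Raw C3 move: the Gauss-code translation of the planar Reidemeister move of
type 3.  Three strands `A`, `B`, `C` (modelled on the lines `y = -1`, `y = x`,
`y = -x` and their directions `(1,0)`, `(1,1)`, `(-1,1)`, possibly reversed
according to `dA`, `dB`, `dC`) meet pairwise in the chords `a = AB`, `b = AC`,
`c = BC`; `oAB`, `oAC`, `oBC` record which strand passes over in each pair and
must come from a linear height order.  The six endpoints form three adjacent
pairs, one on each strand, and the move exchanges the order within each pair;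
the head/tail pattern is determined by the heights and the signs by the heights
and the directions, as in a planar diagram. -/
def C3Raw (u v : GWord) : Prop :=
  ∃ (x y z t : GWord) (a b c : ℕ) (oAB oAC oBC dA dB dC swap : Bool),
    a ≠ b ∧ a ≠ c ∧ b ≠ c ∧
    (oAB = oBC → oAC = oAB) ∧
    (let sa : Bool := (dA == dB) == oAB
     let sb : Bool := (dA == dC) == oAC
     let sc : Bool := (dB == dC) == oBC
     let PA : GWord :=
       if dA then [(a, !oAB, sa), (b, !oAC, sb)] else [(b, !oAC, sb), (a, !oAB, sa)]
     let PB : GWord :=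
       if dB then [(a, oAB, sa), (c, !oBC, sc)] else [(c, !oBC, sc), (a, oAB, sa)]
     let PC : GWord :=
       if dC then [(b, oAC, sb), (c, oBC, sc)] else [(c, oBC, sc), (b, oAC, sb)]
     let Q1 : GWord := if swap then PC else PB
     let Q2 : GWord := if swap then PB else PC
     u = x ++ PA ++ y ++ Q1 ++ z ++ Q2 ++ t ∧
     v = x ++ PA.reverse ++ y ++ Q1.reverse ++ z ++ Q2.reverse ++ t)

/-- One welded Reidemeister move (C1, C2, C3 or W, in either direction),
performed up to cyclic permutation and renaming of chords. -/
def WeldedStep (u v : GWord) : Prop :=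
  ∃ u₀ v₀ : GWord, CyclicRename u u₀ ∧ CyclicRename v₀ v ∧
    (C1delRaw u₀ v₀ ∨ C1delRaw v₀ u₀ ∨ C2delRaw u₀ v₀ ∨ C2delRaw v₀ u₀ ∨
     C3Raw u₀ v₀ ∨ C3Raw v₀ u₀ ∨ WRaw u₀ v₀)

/-- Welded equivalence: two Gauss codes are welded-equivalent if they are
related by a finite sequence of C1, C2, C3 and W moves (on cyclic words). -/
def WeldedEquiv : GWord → GWord → Prop := Relation.EqvGen WeldedStep

/-- A Gauss code represents the trivial welded knot iff it is
welded-equivalent to the empty code. -/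
def RepresentsTrivial (w : GWord) : Prop := WeldedEquiv w []

/-- One C1 or W move (in either direction), up to cyclic permutation and
renaming of chords. -/
def CWStep (u v : GWord) : Prop :=
  ∃ u₀ v₀ : GWord, CyclicRename u u₀ ∧ CyclicRename v₀ v ∧
    (C1delRaw u₀ v₀ ∨ C1delRaw v₀ u₀ ∨ WRaw u₀ v₀)

/-- Relatedness by a finite sequence of C1 and W moves alone. -/
def CWEquiv : GWord → GWord → Prop := Relation.EqvGen CWStep

/-- One W move, up to cyclic permutation. -/
def WStepRot (u v : GWord) : Prop :=
  ∃ u₀ v₀ : GWord, RotEq u u₀ ∧ RotEq v₀ v ∧ WRaw u₀ v₀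

/-- One deleting C1 move, up to cyclic permutation. -/
def C1StepRot (u v : GWord) : Prop :=
  ∃ u₀ v₀ : GWord, RotEq u u₀ ∧ RotEq v₀ v ∧ C1delRaw u₀ v₀

/-- In the linear word `v`, no chord has its head occurring strictly before
its tail. -/
def TailsFirst (v : GWord) : Prop :=
  ¬ ∃ (x y z : GWord) (a : ℕ) (s s' : Bool),
      v = x ++ (a, true, s) :: (y ++ (a, false, s') :: z)

/-- A Gauss code is descending if the cyclic word can be cut at some point and
read in one of the two directions so that every chord's tail occurs before its
head. -/
def IsDescending (w : GWord) : Prop :=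
  ∃ n : ℕ, TailsFirst (w.rotate n) ∨ TailsFirst ((w.rotate n).reverse)

/-- `c(D)`: the minimal number of chords of a Gauss code representing the same
welded knot as `D`. -/
noncomputable def minCrossing (D : GWord) : ℕ :=
  sInf {n : ℕ | ∃ D' : GWord, IsGaussCode D' ∧ WeldedEquiv D D' ∧ (chordSet D').ncard = n}

/-- `u(D)`: the minimal cardinality of a set `S` of chords of `D` such that the
crossing change at `S` turns `D` into a Gauss code representing the trivial
welded knot. -/
noncomputable def unknottingNumWord (D : GWord) : ℕ :=
  sInf {k : ℕ | ∃ S : Finset ℕ, ↑S ⊆ chordSet D ∧ S.card = k ∧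
    WeldedEquiv (crossingChange S D) []}

/-- `u(K)`: the minimum of `u(D')` over all Gauss codes `D'` representing the
same welded knot as `D`. -/
noncomputable def unknottingNum (D : GWord) : ℕ :=
  sInf {k : ℕ | ∃ D' : GWord, IsGaussCode D' ∧ WeldedEquiv D D' ∧ unknottingNumWord D' = k}

/-!
Rotate the code so that it starts with a tail.  With one chord the two endpoints are then
adjacent and a C1 move removes them.  With two chords `a`, `b` there are six arrangements of
the remaining three endpoints.  If the chords are not interleaved, each one has (cyclically)
adjacent endpoints and two C1 moves finish.  If they are interleaved, every endpoint of `a` is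
cyclically adjacent to every endpoint of `b`, in particular the two tails are, and a W move
exchanging them makes the chords non-interleaved.
-/

lemma List.eq_of_perm_triple {α : Type*} {l : List α} {x y z : α} (h : l.Perm [x, y, z]) :
    l = [x, y, z] ∨ l = [y, x, z] ∨ l = [y, z, x] ∨ l = [x, z, y] ∨ l = [z, x, y] ∨
      l = [z, y, x] := by
  rw [← List.mem_permutations'] at h
  simpa [List.permutations', List.permutations'Aux] using h

lemma chordSet_finite (w : GWord) : (chordSet w).Finite :=
  (List.finite_toSet w).image Prod.fst

lemma chordSet_eq_empty_iff {w : GWord} : chordSet w = ∅ ↔ w = [] := by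
  refine ⟨fun h => ?_, fun h => by simp [h, chordSet]⟩
  rcases w with _ | ⟨e, w⟩
  · rfl
  · exact (Set.eq_empty_iff_forall_notMem.mp h e.1 ⟨e, List.mem_cons_self, rfl⟩).elim

lemma CyclicRename.refl (w : GWord) : CyclicRename w w :=
  ⟨0, id, Function.injective_id, by simp [relabelWord]⟩

local infix:50 " ≈cw " => CWEquiv

namespace CWEquiv

protected lemma trans {u v w : GWord} : u ≈cw v → v ≈cw w → u ≈cw w :=
  Relation.EqvGen.trans _ _ _

instance : Trans CWEquiv CWEquiv CWEquiv := ⟨CWEquiv.trans⟩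

lemma c1_del (x y : GWord) (a : ℕ) (h s : Bool) (ha : ∀ e ∈ x ++ y, e.1 ≠ a) :
    x ++ (a, h, s) :: (a, !h, s) :: y ≈cw x ++ y :=
  .rel _ _ ⟨_, _, .refl _, .refl _, .inl ⟨x, y, a, h, s, ha, rfl, rfl⟩⟩

lemma w_swap (x y : GWord) (a b : ℕ) (s t : Bool) :
    x ++ (a, false, s) :: (b, false, t) :: y ≈cw x ++ (b, false, t) :: (a, false, s) :: y :=
  .rel _ _ ⟨_, _, .refl _, .refl _, .inr (.inr ⟨x, y, a, b, s, t, rfl, rfl⟩)⟩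

/-- Insert a kink on a fresh chord, then delete it in the renamed word. -/
lemma of_cyclicRename {u v : GWord} (huv : CyclicRename u v) : u ≈cw v := by
  obtain ⟨a, ha⟩ := (chordSet_finite u).infinite_compl.nonempty
  have hkink : C1delRaw ((a, false, false) :: (a, true, false) :: u) u :=
    ⟨[], u, a, false, false, fun e he heq => ha ⟨e, by simpa using he, heq⟩, rfl, rfl⟩
  calc u ≈cw (a, false, false) :: (a, true, false) :: u :=
        .rel _ _ ⟨u, _, .refl _, .refl _, .inr (.inl hkink)⟩
    _ ≈cw v := .rel _ _ ⟨_, u, .refl _, huv, .inl hkink⟩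

lemma rotate (w : GWord) (n : ℕ) : w ≈cw w.rotate n :=
  of_cyclicRename ⟨n, id, Function.injective_id, by simp [relabelWord]⟩

lemma twoKinks_nil {a b : ℕ} (hab : a ≠ b) (h h' s t : Bool) :
    [(a, h, s), (a, !h, s), (b, h', t), (b, !h', t)] ≈cw [] :=
  calc _ ≈cw [(b, h', t), (b, !h', t)] := c1_del [] _ a h s (by simp [hab.symm])
    _ ≈cw [] := c1_del [] [] b h' t (by simp)

lemma nested_nil {a b : ℕ} (hab : a ≠ b) (h h' s t : Bool) :
    [(a, h, s), (b, h', t), (b, !h', t), (a, !h, s)] ≈cw [] :=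
  (rotate _ 3).trans (by simpa using twoKinks_nil hab (!h) h' s t)

lemma nil_of_perm_oneChord {D : GWord} {a : ℕ} {s : Bool}
    (hD : D.Perm [(a, false, s), (a, true, s)]) : D ≈cw [] := by
  rcases List.perm_pair.mp hD with rfl | rfl
  · exact c1_del [] [] a false s (by simp)
  · exact c1_del [] [] a true s (by simp)

lemma nil_of_perm_twoChords {D : GWord} {a b : ℕ} {s t : Bool} (hab : a ≠ b)
    (hD : D.Perm [(a, false, s), (a, true, s), (b, false, t), (b, true, t)]) : D ≈cw [] := by
  obtain ⟨l₁, l₂, rfl⟩ := List.append_of_mem (hD.mem_iff.mpr List.mem_cons_self)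
  have hrot := List.rotate_append_length_eq l₁ ((a, false, s) :: l₂)
  have hrest : (l₂ ++ l₁).Perm [(a, true, s), (b, false, t), (b, true, t)] :=
    (hrot ▸ (List.rotate_perm _ l₁.length).trans hD).cons_inv
  refine (rotate _ l₁.length).trans ?_
  rw [hrot, List.cons_append]
  rcases List.eq_of_perm_triple hrest with h | h | h | h | h | h <;> rw [h]
  · simpa using twoKinks_nil hab false false s t
  · calc _ ≈cw [(b, false, t), (a, false, s), (a, true, s), (b, true, t)] := w_swap [] _ a b s t
      _ ≈cw [] := by simpa using nested_nil hab.symm false false t s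
  · simpa using nested_nil hab false false s t
  · simpa using twoKinks_nil hab false true s t
  · calc _ ≈cw [(b, false, t), (a, false, s), (b, true, t), (a, true, s)] := rotate _ 3
      _ ≈cw [(a, false, s), (b, false, t), (b, true, t), (a, true, s)] := w_swap [] _ b a t s
      _ ≈cw [] := by simpa using nested_nil hab false false s t
  · simpa using nested_nil hab false true s t

end CWEquiv

namespace IsGaussCode

variable {D : GWord} (hD : IsGaussCode D)
include hD

lemma filter_perm {a : ℕ} (ha : a ∈ chordSet D) :
    ∃ s, (D.filter (·.1 == a)).Perm [(a, false, s), (a, true, s)] := by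
  obtain ⟨hcount, s, htail, hhead⟩ := hD a ha
  have hsub : [(a, false, s), (a, true, s)] ⊆ D.filter (·.1 == a) := by
    simp [List.subset_def, htail, hhead]
  refine ⟨s, ((List.Nodup.subperm (by simp) hsub).perm_of_length_le ?_).symm⟩
  simp [← List.countP_eq_length_filter, hcount]

lemma perm_of_chordSet_eq_singleton {a : ℕ} (ha : chordSet D = {a}) :
    ∃ s, D.Perm [(a, false, s), (a, true, s)] := by
  have hfilter : D.filter (·.1 == a) = D := List.filter_eq_self.mpr fun e he => by
    have he' : e.1 ∈ chordSet D := ⟨e, he, rfl⟩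
    simpa [ha] using he'
  simpa [hfilter] using hD.filter_perm (ha ▸ rfl : a ∈ chordSet D)

lemma perm_of_chordSet_eq_pair {a b : ℕ} (hab : a ≠ b) (hchords : chordSet D = {a, b}) :
    ∃ s t, D.Perm [(a, false, s), (a, true, s), (b, false, t), (b, true, t)] := by
  obtain ⟨s, hs⟩ := hD.filter_perm (by simp [hchords] : a ∈ chordSet D)
  obtain ⟨t, ht⟩ := hD.filter_perm (by simp [hchords] : b ∈ chordSet D)
  have hcompl : D.filter (fun e => !(e.1 == a)) = D.filter (·.1 == b) :=
    List.filter_congr fun e he => by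
      have he' : e.1 ∈ chordSet D := ⟨e, he, rfl⟩
      rw [hchords, Set.mem_insert_iff, Set.mem_singleton_iff] at he'
      rcases he' with h | h <;> simp [h, hab, hab.symm]
  have hsplit := List.filter_append_perm (·.1 == a) D
  rw [hcompl] at hsplit
  exact ⟨s, t, hsplit.symm.trans (hs.append ht)⟩

end IsGaussCode

/-- Every Gauss code with at most two chords can be
transformed into the empty code by a finite sequence of C1 and W moves. -/
theorem atMostTwoChords_CW_trivial (D : GWord) (hD : IsGaussCode D)
    (hcard : (chordSet D).ncard ≤ 2) :
    CWEquiv D [] := by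
  interval_cases hn : (chordSet D).ncard
  · rw [Set.ncard_eq_zero (chordSet_finite D), chordSet_eq_empty_iff] at hn
    exact hn ▸ .refl _
  · obtain ⟨a, ha⟩ := Set.ncard_eq_one.mp hn
    obtain ⟨s, hs⟩ := hD.perm_of_chordSet_eq_singleton ha
    exact CWEquiv.nil_of_perm_oneChord hs
  · obtain ⟨a, b, hab, hchords⟩ := Set.ncard_eq_two.mp hn
    obtain ⟨s, t, hst⟩ := hD.perm_of_chordSet_eq_pair hab hchords
    exact CWEquiv.nil_of_perm_twoChords hab hst
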